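/- arXiv:2305.13991 — 2 statements merged into one kernel-verified Lean document; each statement's English description precedes it below -/
import Mathlib

section
/- For every α ∈ [0,1] and vectors z_adv, z_lb : ℝ^c with z_lb ≤ z_adv componentwise and label y with z_adv[y] = z_lb[y] = 0: log(1 + ∑_{i ≠ y} exp(-z_adv[i])^(1-α) · exp(-z_lb[i])^α) ≤ (1-α)·log(1 + ∑_{i ≠ y} exp(-z_adv[i])) + α·log(1 + ∑_{i ≠ y} exp(-z_lb[i])). -/
open Finset

lemma holder_one_add_sum {ι : Type*} (s : Finset ι) (a b : ι → ℝ)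
    (ha : ∀ i ∈ s, 0 ≤ a i) (hb : ∀ i ∈ s, 0 ≤ b i)
    (α : ℝ) (hα0 : 0 ≤ α) (hα1 : α ≤ 1) :
    1 + ∑ i ∈ s, a i ^ (1 - α) * b i ^ α ≤
      (1 + ∑ i ∈ s, a i) ^ (1 - α) * (1 + ∑ i ∈ s, b i) ^ α := by
  set A := 1 + ∑ i ∈ s, a i with hAdef
  set B := 1 + ∑ i ∈ s, b i with hBdef
  have hA : 0 < A := by
    have := Finset.sum_nonneg ha; rw [hAdef]; linarith
  have hB : 0 < B := by
    have := Finset.sum_nonneg hb; rw [hBdef]; linarith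
  set C := A ^ (1 - α) * B ^ α with hCdef
  have hC : 0 < C := by positivity
  have h1α : 0 ≤ 1 - α := by linarith
  have hterm : ∀ i ∈ s, a i ^ (1 - α) * b i ^ α ≤
      C * ((1 - α) * (a i / A) + α * (b i / B)) := by
    intro i hi
    have hgm := Real.geom_mean_le_arith_mean2_weighted h1α hα0
      (div_nonneg (ha i hi) hA.le) (div_nonneg (hb i hi) hB.le) (by ring)
    have heq : a i ^ (1 - α) * b i ^ α =
        C * ((a i / A) ^ (1 - α) * (b i / B) ^ α) := by
      rw [hCdef, Real.div_rpow (ha i hi) hA.le, Real.div_rpow (hb i hi) hB.le]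
      have hA' : A ^ (1 - α) ≠ 0 := by positivity
      have hB' : B ^ α ≠ 0 := by positivity
      field_simp
    rw [heq]
    exact mul_le_mul_of_nonneg_left hgm hC.le
  have hone : 1 ≤ C * ((1 : ℝ) * (1 - α) * (1 / A) + α * (1 / B)) := by
    have hgm := Real.geom_mean_le_arith_mean2_weighted h1α hα0
      (by positivity : (0:ℝ) ≤ 1 / A) (by positivity : (0:ℝ) ≤ 1 / B) (by ring)
    have heq : (1 : ℝ) = C * ((1 / A) ^ (1 - α) * (1 / B) ^ α) := by
      rw [hCdef, Real.div_rpow zero_le_one hA.le, Real.div_rpow zero_le_one hB.le]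
      have hA' : A ^ (1 - α) ≠ 0 := by positivity
      have hB' : B ^ α ≠ 0 := by positivity
      field_simp
      simp
    calc (1 : ℝ) = C * ((1 / A) ^ (1 - α) * (1 / B) ^ α) := heq
      _ ≤ C * ((1 - α) * (1 / A) + α * (1 / B)) :=
          mul_le_mul_of_nonneg_left hgm hC.le
      _ = C * ((1 : ℝ) * (1 - α) * (1 / A) + α * (1 / B)) := by ring
  have hsumle : ∑ i ∈ s, a i ^ (1 - α) * b i ^ α ≤
      ∑ i ∈ s, C * ((1 - α) * (a i / A) + α * (b i / B)) :=
    Finset.sum_le_sum hterm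
  have hsum : ∑ i ∈ s, C * ((1 - α) * (a i / A) + α * (b i / B)) =
      C * ((1 - α) * ((∑ i ∈ s, a i) / A) + α * ((∑ i ∈ s, b i) / B)) := by
    rw [← Finset.mul_sum, Finset.sum_add_distrib]
    simp only [← Finset.mul_sum, ← Finset.sum_div]
  have hfinal : C * ((1 : ℝ) * (1 - α) * (1 / A) + α * (1 / B)) +
      C * ((1 - α) * ((∑ i ∈ s, a i) / A) + α * ((∑ i ∈ s, b i) / B)) = C := by
    have : (1 - α) * (1 / A) + (1 - α) * ((∑ i ∈ s, a i) / A) = 1 - α := by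
      have hA0 : A ≠ 0 := hA.ne'
      field_simp
      rw [hAdef]
    have hbb : α * (1 / B) + α * ((∑ i ∈ s, b i) / B) = α := by
      have hB0 : B ≠ 0 := hB.ne'
      field_simp
      rw [hBdef]
    nlinarith [this, hbb]
  calc 1 + ∑ i ∈ s, a i ^ (1 - α) * b i ^ α
      ≤ C * ((1:ℝ) * (1 - α) * (1 / A) + α * (1 / B)) +
        C * ((1 - α) * ((∑ i ∈ s, a i) / A) + α * ((∑ i ∈ s, b i) / B)) := by
        rw [← hsum]; exact add_le_add hone hsumle
    _ = C := hfinal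

/-- CC-IBP ≤ MTL-IBP for the cross-entropy loss (instantiation of Prop. 4.2). -/
theorem cc_ibp_le_mtl_ibp_crossentropy {c : ℕ} (y : Fin c)
    (z_adv z_lb : Fin c → ℝ) (hle : z_lb ≤ z_adv)
    (hadv : z_adv y = 0) (hlb : z_lb y = 0) :
    ∀ α ∈ Set.Icc (0:ℝ) 1,
      Real.log (1 + ∑ i ∈ Finset.univ \ {y},
          Real.exp (-z_adv i) ^ (1 - α) * Real.exp (-z_lb i) ^ α) ≤
        (1 - α) * Real.log (1 + ∑ i ∈ Finset.univ \ {y}, Real.exp (-z_adv i)) +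
          α * Real.log (1 + ∑ i ∈ Finset.univ \ {y}, Real.exp (-z_lb i)) := by
  rintro α ⟨hα0, hα1⟩
  set s := Finset.univ \ {y}
  have hA : (0:ℝ) < 1 + ∑ i ∈ s, Real.exp (-z_adv i) := by positivity
  have hB : (0:ℝ) < 1 + ∑ i ∈ s, Real.exp (-z_lb i) := by positivity
  have key := holder_one_add_sum s (fun i => Real.exp (-z_adv i))
    (fun i => Real.exp (-z_lb i)) (fun i _ => (Real.exp_pos _).le)
    (fun i _ => (Real.exp_pos _).le) α hα0 hα1
  have hlhs : (0:ℝ) < 1 + ∑ i ∈ s,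
      Real.exp (-z_adv i) ^ (1 - α) * Real.exp (-z_lb i) ^ α := by
    have : ∀ i ∈ s, (0:ℝ) ≤ Real.exp (-z_adv i) ^ (1 - α) * Real.exp (-z_lb i) ^ α :=
      fun i _ => by positivity
    have := Finset.sum_nonneg this
    linarith
  calc Real.log (1 + ∑ i ∈ s, Real.exp (-z_adv i) ^ (1 - α) * Real.exp (-z_lb i) ^ α)
      ≤ Real.log ((1 + ∑ i ∈ s, Real.exp (-z_adv i)) ^ (1 - α) *
          (1 + ∑ i ∈ s, Real.exp (-z_lb i)) ^ α) := Real.log_le_log hlhs key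
    _ = (1 - α) * Real.log (1 + ∑ i ∈ s, Real.exp (-z_adv i)) +
        α * Real.log (1 + ∑ i ∈ s, Real.exp (-z_lb i)) := by
        rw [Real.log_mul (by positivity) (by positivity),
          Real.log_rpow hA, Real.log_rpow hB]
end

section
/- Soundness of IBP for a two-layer network: let W₁ ∈ ℝ^{h×d}, b₁ ∈ ℝ^h, W₂ ∈ ℝ^{c×h}, b₂ ∈ ℝ^c, σ = ReLU applied componentwise, and f(x) = W₂·σ(W₁x + b₁) + b₂. Define l̂₁ = W₁x + b₁ - ε·|W₁|·1, û₁ = W₁x + b₁ + ε·|W₁|·1, and l̂₂ = [W₂]₊·σ(l̂₁) + [W₂]₋·σ(û₁) + b₂, where [·]₊, [·]₋ denote componentwise positive and negative parts and |W₁| the componentwise absolute value. Then for every x' with ‖x' - x‖_∞ ≤ ε, l̂₂ ≤ f(x') componentwise. -/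
/-- Soundness of IBP for a two-layer ReLU network (Appendix A, equation (7)):
the computed `lhat2` is a sound componentwise lower bound on the network output
over the ℓ∞ perturbation ball of radius ε. -/
theorem ibp_two_layer_soundness {d h c : ℕ}
    (W₁ : Fin h → Fin d → ℝ) (b₁ : Fin h → ℝ)
    (W₂ : Fin c → Fin h → ℝ) (b₂ : Fin c → ℝ)
    (x : Fin d → ℝ) (ε : ℝ)
    (f : (Fin d → ℝ) → Fin c → ℝ)
    (hf : ∀ x' i, f x' i = (∑ j, W₂ i j * max ((∑ k, W₁ j k * x' k) + b₁ j) 0) + b₂ i)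
    (lhat1 uhat1 : Fin h → ℝ)
    (hl1 : ∀ j, lhat1 j = (∑ k, W₁ j k * x k) + b₁ j - ε * ∑ k, |W₁ j k|)
    (hu1 : ∀ j, uhat1 j = (∑ k, W₁ j k * x k) + b₁ j + ε * ∑ k, |W₁ j k|)
    (lhat2 : Fin c → ℝ)
    (hl2 : ∀ i, lhat2 i =
      (∑ j, (max (W₂ i j) 0 * max (lhat1 j) 0 + min (W₂ i j) 0 * max (uhat1 j) 0))
        + b₂ i) :
    ∀ x' : Fin d → ℝ, (∀ k, |x' k - x k| ≤ ε) → ∀ i, lhat2 i ≤ f x' i := by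
  intro x' hx i
  -- pre-activation bounds
  have hdiff : ∀ j, |(∑ k, W₁ j k * x' k) - ∑ k, W₁ j k * x k| ≤ ε * ∑ k, |W₁ j k| := by
    intro j
    rw [← Finset.sum_sub_distrib]
    calc |∑ k, (W₁ j k * x' k - W₁ j k * x k)| ≤ ∑ k, |W₁ j k * x' k - W₁ j k * x k| :=
          Finset.abs_sum_le_sum_abs _ _
      _ ≤ ∑ k, |W₁ j k| * ε := by
          apply Finset.sum_le_sum
          intro k _
          rw [← mul_sub, abs_mul]
          exact mul_le_mul_of_nonneg_left (hx k) (abs_nonneg _)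
      _ = ε * ∑ k, |W₁ j k| := by rw [← Finset.sum_mul, mul_comm]
  have hz : ∀ j, lhat1 j ≤ (∑ k, W₁ j k * x' k) + b₁ j ∧
      (∑ k, W₁ j k * x' k) + b₁ j ≤ uhat1 j := by
    intro j
    have := abs_le.mp (hdiff j)
    constructor
    · rw [hl1 j]; linarith [this.1]
    · rw [hu1 j]; linarith [this.2]
  -- ReLU monotone bounds
  rw [hl2 i, hf x' i]
  gcongr with j _
  set z := (∑ k, W₁ j k * x' k) + b₁ j with hzdef
  have h1 : max (lhat1 j) 0 ≤ max z 0 := max_le_max (hz j).1 le_rfl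
  have h2 : max z 0 ≤ max (uhat1 j) 0 := max_le_max (hz j).2 le_rfl
  rcases le_total 0 (W₂ i j) with hW | hW
  · rw [max_eq_left hW, min_eq_right hW, zero_mul, add_zero]
    exact mul_le_mul_of_nonneg_left h1 hW
  · rw [max_eq_right hW, min_eq_left hW, zero_mul, zero_add]
    exact mul_le_mul_of_nonpos_left h2 hW
end
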